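/- arXiv:1806.00464 — 2 statements merged into one kernel-verified Lean document; each statement's English description precedes it below -/
import Mathlib

section
/- Let k be a field of characteristic p > 0 and B a finite-dimensional commutative k-algebra with a k-algebra homomorphism π : B → k such that x^p = 0 for every x ∈ ker π. Let k ⊆ K ⊆ L be a tower of fields and ∂ : K → K ⊗_k B a B-operator on K. Let R be an integral domain which is a finitely generated K-algebra, b : R → L an injective K-algebra homomorphism, Ω an algebraically closed field extension of L, and c : R → Ω ⊗_k B a k-algebra homomorphism such that c ∘ (K → R) = ι ∘ ∂ (where ι : K ⊗_k B → Ω ⊗_k B is induced by K ⊆ Ω) and (id_Ω ⊗ π) ∘ c equals the composition of b with the inclusion L ⊆ Ω. Then there exists a k-algebra homomorphism c' : R → L ⊗_k B such that c' ∘ (K → R) = ι' ∘ ∂ (where ι' : K ⊗_k B → L ⊗_k B is induced by K ⊆ L) and (id_L ⊗ π) ∘ c' = b. -/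
/-!
Every `ξ : T ⊗[k] B` satisfies `ξ ^ p = (id ⊗ π)(ξ) ^ p ⊗ 1`, so `ξ` is a unit as soon as
`(id ⊗ π)(ξ) ≠ 0`. Hence `b` and `c` extend to the fraction field `F` of `R`, and the `x : F`
with `c x ∈ L ⊗[k] B` form a subfield `S` containing `K` and `F ^ p`. Starting from `S`,
adjoin the generators of `R` one at a time: if `x ∉ E` and `x ^ p ∈ E`, then
`E(x) ≅ E[X] ⧸ (X ^ p - x ^ p)`, and `x ↦ b x ⊗ 1` extends the point because
`(b x ⊗ 1) ^ p = c (x ^ p)`.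
-/

open TensorProduct

/-- The underlying homomorphism extractor `∂₀ = (id_T ⊗ π) ∘ ∂` of a `B`-operator:
the algebra map `T ⊗[k] B → T` induced by `π : B → k` and `T ⊗[k] k ≅ T`. -/
noncomputable def BOp.counit (k T B : Type*) [CommSemiring k] [CommSemiring T] [Algebra k T]
    [CommSemiring B] [Algebra k B] (π : B →ₐ[k] k) : T ⊗[k] B →ₐ[k] T :=
  (Algebra.TensorProduct.rid k k T).toAlgHom.comp
    (Algebra.TensorProduct.map (AlgHom.id k T) π)

theorem RingHom.exists_subfield_lift_of_isLocalHom {F A C : Type*} [Field F] [Ring A] [Ring C]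
    (γ : F →+* C) {j : A →+* C} [IsLocalHom j] (hj : Function.Injective j) :
    ∃ (S : Subfield F) (φ : S →+* A), (∀ x, x ∈ S ↔ γ x ∈ j.range) ∧
      j.comp φ = γ.comp S.subtype := by
  let S : Subfield F :=
    { j.range.comap γ with
      inv_mem' := by
        rintro x ⟨ζ, hζ⟩
        rcases eq_or_ne x 0 with rfl | hx
        · exact ⟨0, by simp⟩
        obtain ⟨u, rfl⟩ := isUnit_of_map_unit j ζ (hζ ▸ (IsUnit.mk0 x hx).map γ)
        refine ⟨↑u⁻¹, left_inv_eq_right_inv (a := γ x) ?_ ?_⟩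
        · rw [← hζ, ← map_mul, Units.inv_mul, map_one]
        · rw [← map_mul, mul_inv_cancel₀ hx, map_one] }
  let e := RingEquiv.ofLeftInverse (Function.leftInverse_invFun hj)
  refine ⟨S, e.symm.toRingHom.comp ((γ.comp S.subtype).codRestrict j.range fun x => x.2),
    fun x => Iff.rfl, ?_⟩
  ext x
  exact Function.invFun_eq (f := j) x.2

section Extension

variable {p : ℕ} [hp : Fact p.Prime] {F A L : Type*} [Field F] [CharP F p] [CommRing A]
  [CommRing L]

open Polynomial in
theorem Subfield.exists_extend_ringHom_of_pow_mem {E : Subfield F} (φ : E →+* A) (ε : A →+* L)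
    (β : F →+* L) (hφ : ε.comp φ = β.comp E.subtype) {x : F} (hx : x ^ p ∈ E) {y : A}
    (hy : y ^ p = φ ⟨x ^ p, hx⟩) (hεy : ε y = β x) :
    ∃ (E' : Subfield F) (hE : E ≤ E') (φ' : E' →+* A), x ∈ E' ∧
      φ'.comp (Subfield.inclusion hE) = φ ∧ ε.comp φ' = β.comp E'.subtype := by
  by_cases hxE : x ∈ E
  · exact ⟨E, le_rfl, φ, hxE, rfl, hφ⟩
  set g : E[X] := X ^ p - C ⟨x ^ p, hx⟩
  have : Fact (Irreducible g) := by
    refine ⟨X_pow_sub_C_irreducible_of_prime hp.out fun w hw => hxE ?_⟩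
    have : (w : F) = x := frobenius_inj F p (congrArg Subtype.val hw)
    exact this ▸ w.2
  let mF : AdjoinRoot g →+* F := AdjoinRoot.lift E.subtype x (by simp [g])
  let mA : AdjoinRoot g →+* A := AdjoinRoot.lift φ y (by simp [g, hy])
  let e := mF.rangeRestrictFieldEquiv
  have hE : E ≤ mF.fieldRange := fun z hz => ⟨AdjoinRoot.of g ⟨z, hz⟩, by simp [mF]⟩
  have hmA : ε.comp mA = β.comp mF :=
    AdjoinRoot.ringHom_ext (by ext z; simpa [mA, mF] using congr($hφ z)) (by simp [mA, mF, hεy])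
  refine ⟨mF.fieldRange, hE, mA.comp e.symm.toRingHom, ⟨AdjoinRoot.root g, by simp [mF]⟩, ?_, ?_⟩
  · ext z
    have : e.symm (Subfield.inclusion hE z) = AdjoinRoot.of g z := by
      rw [RingEquiv.symm_apply_eq]; ext; simp [e, mF]; rfl
    simp [this, mA]
  · ext z
    obtain ⟨q, rfl⟩ := e.surjective z
    simpa [e] using congr($hmA q)

theorem Subfield.exists_extend_ringHom_of_forall_pow_mem {E : Subfield F} (φ : E →+* A)
    (ε : A →+* L) (β : F →+* L) (hφ : ε.comp φ = β.comp E.subtype) (hE : ∀ x : F, x ^ p ∈ E)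
    (σ : F → A) (hσ : ∀ x, σ x ^ p = φ ⟨x ^ p, hE x⟩) (hεσ : ∀ x, ε (σ x) = β x)
    (s : Finset F) :
    ∃ (E' : Subfield F) (hE' : E ≤ E') (φ' : E' →+* A), ↑s ⊆ (E' : Set F) ∧
      φ'.comp (Subfield.inclusion hE') = φ ∧ ε.comp φ' = β.comp E'.subtype := by
  induction s using Finset.cons_induction with
  | empty => exact ⟨E, le_rfl, φ, by simp, rfl, hφ⟩
  | cons x s _ ih =>
    obtain ⟨E', hEE', φ', hs, hres, hφ'⟩ := ih
    have hy : σ x ^ p = φ' ⟨x ^ p, hEE' (hE x)⟩ := (hσ x).trans congr($hres.symm ⟨x ^ p, hE x⟩)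
    obtain ⟨E'', hE'E'', φ'', hx, hres', hφ''⟩ :=
      Subfield.exists_extend_ringHom_of_pow_mem φ' ε β hφ' (hEE' (hE x)) hy (hεσ x)
    refine ⟨E'', hEE'.trans hE'E'', φ'', ?_, ?_, hφ''⟩
    · simpa [Set.insert_subset_iff] using ⟨hx, hs.trans hE'E''⟩
    · rw [← hres, ← hres']
      rfl

end Extension

theorem Algebra.TensorProduct.map_id_injective {k B T T' : Type*} [Field k] [CommRing B]
    [Algebra k B] [CommRing T] [Algebra k T] [CommRing T'] [Algebra k T'] {f : T →ₐ[k] T'}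
    (hf : Function.Injective f) :
    Function.Injective (Algebra.TensorProduct.map f (AlgHom.id k B)) :=
  Module.Flat.rTensor_preserves_injective_linearMap (M := B) f.toLinearMap hf

namespace BOp

variable {k B : Type*} [Field k] [CommRing B] [Algebra k B]

@[simp]
theorem counit_tmul (π : B →ₐ[k] k) (T : Type*) [CommRing T] [Algebra k T] (t : T) (x : B) :
    counit k T B π (t ⊗ₜ x) = π x • t := by
  simp [counit]

theorem counit_comp_map (π : B →ₐ[k] k) {T T' : Type*} [CommRing T] [Algebra k T] [CommRing T']
    [Algebra k T'] (f : T →ₐ[k] T') :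
    (counit k T' B π).comp (Algebra.TensorProduct.map f (AlgHom.id k B)) =
      f.comp (counit k T B π) := by
  ext <;> simp

variable {π : B →ₐ[k] k} {p : ℕ} [Fact p.Prime] [CharP k p]
  (hπ : ∀ x ∈ RingHom.ker π, x ^ p = 0)
include hπ

theorem pow_char_eq_algebraMap (x : B) : x ^ p = algebraMap k B (π x ^ p) := by
  have : Nontrivial B := π.domain_nontrivial
  have : CharP B p := charP_of_injective_algebraMap' k p
  have hx : x - algebraMap k B (π x) ∈ RingHom.ker π := by simp [RingHom.mem_ker]
  rw [map_pow, ← sub_eq_zero, ← sub_pow_char]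
  exact hπ _ hx

theorem pow_char_eq_tmul_one {T : Type*} [CommRing T] [Algebra k T] [Nontrivial T]
    (ξ : T ⊗[k] B) : ξ ^ p = (counit k T B π ξ ^ p) ⊗ₜ 1 := by
  have : Nontrivial (T ⊗[k] B) := (counit k T B π).domain_nontrivial
  have : CharP (T ⊗[k] B) p := charP_of_injective_algebraMap' k p
  have : CharP T p := charP_of_injective_algebraMap' k p
  induction ξ using TensorProduct.induction_on with
  | zero => simp [zero_pow (Fact.out : p.Prime).ne_zero]
  | tmul t x =>
    rw [Algebra.TensorProduct.tmul_pow, pow_char_eq_algebraMap hπ, counit_tmul, smul_pow,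
      Algebra.algebraMap_eq_smul_one, TensorProduct.tmul_smul, TensorProduct.smul_tmul']
  | add ξ η hξ hη => rw [add_pow_char, hξ, hη, map_add, add_pow_char, TensorProduct.add_tmul]

theorem isUnit_of_counit_ne_zero {T : Type*} [Field T] [Algebra k T] {ξ : T ⊗[k] B}
    (h : counit k T B π ξ ≠ 0) : IsUnit ξ := by
  have hp : IsUnit (ξ ^ p) := by
    rw [pow_char_eq_tmul_one hπ]
    exact (IsUnit.mk0 _ (pow_ne_zero p h)).map Algebra.TensorProduct.includeLeftRingHom
  exact (isUnit_pow_iff (Fact.out : p.Prime).ne_zero).mp hp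

variable {T T' : Type*} [Field T] [Algebra k T] [Field T'] [Algebra k T'] (f : T →ₐ[k] T')

theorem isLocalHom_map : IsLocalHom (Algebra.TensorProduct.map f (AlgHom.id k B)) := by
  refine ⟨fun ξ hξ => isUnit_of_counit_ne_zero hπ fun h => (hξ.map (counit k T' B π)).ne_zero ?_⟩
  rw [← AlgHom.comp_apply, counit_comp_map, AlgHom.comp_apply, h, map_zero]

theorem exists_subfield_descent {F : Type*} [Field F] (β : F →+* T) (γ : F →+* T' ⊗[k] B)
    (hγ : (counit k T' B π : T' ⊗[k] B →+* T').comp γ = (f : T →+* T').comp β) (s : Finset F) :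
    ∃ (E : Subfield F) (ψ : E →+* T ⊗[k] B), ↑s ⊆ (E : Set F) ∧
      (∀ x, γ x ∈ Set.range (Algebra.TensorProduct.map f (AlgHom.id k B)) →
        ∃ hx : x ∈ E, Algebra.TensorProduct.map f (AlgHom.id k B) (ψ ⟨x, hx⟩) = γ x) ∧
      (counit k T B π : T ⊗[k] B →+* T).comp ψ = β.comp E.subtype := by
  set j := Algebra.TensorProduct.map f (AlgHom.id k B)
  have hj : Function.Injective j := Algebra.TensorProduct.map_id_injective f.injective
  have : CharP T p := charP_of_injective_algebraMap' k p
  have : CharP F p := β.charP β.injective p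
  have := isLocalHom_map hπ f
  obtain ⟨S, φ, hS, hjφ⟩ :=
    RingHom.exists_subfield_lift_of_isLocalHom γ (j := (j : T ⊗[k] B →+* T' ⊗[k] B)) hj
  have hφ : (counit k T B π : T ⊗[k] B →+* T).comp φ = β.comp S.subtype := by
    ext x
    apply f.injective
    calc f (counit k T B π (φ x)) = counit k T' B π (j (φ x)) :=
          congr($(counit_comp_map π f) (φ x)).symm
      _ = counit k T' B π (γ x) := congrArg _ congr($hjφ x)
      _ = f (β x) := congr($hγ x)
  have hpow : ∀ z : F, γ z ^ p = j ((β z ⊗ₜ 1) ^ p) := fun z => by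
    have : counit k T' B π (γ z) = f (β z) := congr($hγ z)
    simp [pow_char_eq_tmul_one hπ (γ z), this, j]
  have hSp : ∀ z : F, z ^ p ∈ S := fun z =>
    (hS _).2 ⟨(β z ⊗ₜ 1) ^ p, by rw [map_pow γ, hpow]; rfl⟩
  obtain ⟨E, hSE, ψ, hs, hres, hψ⟩ :=
    Subfield.exists_extend_ringHom_of_forall_pow_mem φ (counit k T B π) β hφ hSp (β · ⊗ₜ 1)
      (fun z => hj <| (hpow z).symm.trans <|
        (map_pow γ z p).symm.trans congr($hjφ ⟨z ^ p, hSp z⟩).symm)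
      (by simp) s
  refine ⟨E, ψ, hs, fun x hx => ⟨hSE ((hS x).2 hx), ?_⟩, hψ⟩
  exact congr(j ($hres ⟨x, (hS x).2 hx⟩)).trans congr($hjφ ⟨x, (hS x).2 hx⟩)

theorem exists_descent {R : Type*} [CommRing R] [IsDomain R] (b : R →+* T)
    (hb : Function.Injective b) (c : R →+* T' ⊗[k] B)
    (hc : (counit k T' B π : T' ⊗[k] B →+* T').comp c = (f : T →+* T').comp b) (s : Finset R)
    (hs : Subring.closure
      ({r | c r ∈ Set.range (Algebra.TensorProduct.map f (AlgHom.id k B))} ∪ ↑s) = ⊤) :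
    ∃ c' : R →+* T ⊗[k] B,
      (∀ r, c r ∈ Set.range (Algebra.TensorProduct.map f (AlgHom.id k B)) →
        Algebra.TensorProduct.map f (AlgHom.id k B) (c' r) = c r) ∧
      (counit k T B π : T ⊗[k] B →+* T).comp c' = b := by
  classical
  let F := FractionRing R
  have hunit : ∀ y : nonZeroDivisors R, IsUnit (c y) := fun y => by
    refine isUnit_of_counit_ne_zero hπ fun h => nonZeroDivisors.coe_ne_zero y (hb ?_)
    apply f.injective
    simpa [h] using congr($hc y).symm
  let γ : F →+* T' ⊗[k] B := IsLocalization.lift hunit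
  let β : F →+* T := IsFractionRing.lift hb
  have hγ : (counit k T' B π : T' ⊗[k] B →+* T').comp γ = (f : T →+* T').comp β :=
    IsLocalization.ringHom_ext (nonZeroDivisors R) (by ext r; simpa [γ, β] using congr($hc r))
  obtain ⟨E, ψ, hsE, hψj, hψ⟩ := exists_subfield_descent hπ f β γ hγ (s.image (algebraMap R F))
  have hR : ∀ r, algebraMap R F r ∈ E := by
    have : Subring.closure ({r | c r ∈ Set.range (Algebra.TensorProduct.map f (AlgHom.id k B))}
        ∪ ↑s) ≤ E.toSubring.comap (algebraMap R F) := by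
      refine Subring.closure_le.2 (Set.union_subset (fun r hr => ?_) fun r hr => hsE (by simpa))
      exact (hψj _ (by simpa [γ] using hr)).1
    exact fun r => this (hs ▸ Subring.mem_top r)
  let ι : R →+* E := (algebraMap R F).codRestrict E hR
  refine ⟨ψ.comp ι, fun r hr => ?_, ?_⟩
  · have hr' : γ (algebraMap R F r) ∈ _ := (IsLocalization.lift_eq (S := F) hunit r).symm ▸ hr
    exact (hψj _ hr').2.trans (IsLocalization.lift_eq (S := F) hunit r)
  · ext r
    exact congr($hψ (ι r)).trans (IsFractionRing.lift_algebraMap hb r)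

end BOp

theorem Algebra.FiniteType.exists_finset_closure_eq_top (K R : Type*) [CommRing K] [CommRing R]
    [Algebra K R] [Algebra.FiniteType K R] :
    ∃ s : Finset R, Subring.closure (Set.range (algebraMap K R) ∪ ↑s) = ⊤ := by
  obtain ⟨s, hs⟩ := Algebra.FiniteType.out (R := K) (A := R)
  exact ⟨s, by rw [← Algebra.adjoin_eq_ring_closure, hs]; rfl⟩

section

variable {k K R A : Type*} [CommSemiring k] [CommSemiring K] [Semiring R] [Semiring A]
  [Algebra k K] [Algebra K R] [Algebra k R] [IsScalarTower k K R] [Algebra k A]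

def RingHom.toAlgHomOfComp (f : R →+* A) (g : K →ₐ[k] A) (h : f.comp (algebraMap K R) = g) :
    R →ₐ[k] A where
  __ := f
  commutes' a := by
    simpa [IsScalarTower.algebraMap_apply k K R] using congr($h (algebraMap k K a))

theorem RingHom.toAlgHomOfComp_comp (f : R →+* A) (g : K →ₐ[k] A)
    (h : f.comp (algebraMap K R) = g) :
    (f.toAlgHomOfComp g h).comp (IsScalarTower.toAlgHom k K R) = g :=
  AlgHom.ext fun a => congr($h a)

end

theorem BOperator.fiber_of_prolongation_has_rational_point_general
    (p : ℕ) [Fact p.Prime] (k : Type*) [Field k] [CharP k p]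
    (B : Type*) [CommRing B] [Algebra k B] (π : B →ₐ[k] k)
    (hπ : ∀ x ∈ RingHom.ker π, x ^ p = 0)
    (K L Ω : Type*) [Field K] [Field L] [Field Ω]
    [Algebra k K] [Algebra k L] [Algebra k Ω]
    [Algebra K L] [IsScalarTower k K L]
    [Algebra L Ω] [IsScalarTower k L Ω]
    [Algebra K Ω] [IsScalarTower k K Ω] [IsScalarTower K L Ω]
    (δ : K →ₐ[k] K ⊗[k] B)
    (R : Type*) [CommRing R] [IsDomain R] [Algebra k R] [Algebra K R] [IsScalarTower k K R]
    [Algebra.FiniteType K R]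
    (b : R →ₐ[K] L) (hb : Function.Injective b)
    (c : R →ₐ[k] Ω ⊗[k] B)
    (hcK : c.comp (IsScalarTower.toAlgHom k K R) =
      (Algebra.TensorProduct.map (IsScalarTower.toAlgHom k K Ω) (AlgHom.id k B)).comp δ)
    (hcb : (BOp.counit k Ω B π).comp c =
      (IsScalarTower.toAlgHom k L Ω).comp (b.restrictScalars k)) :
    ∃ c' : R →ₐ[k] L ⊗[k] B,
      c'.comp (IsScalarTower.toAlgHom k K R) =
        (Algebra.TensorProduct.map (IsScalarTower.toAlgHom k K L) (AlgHom.id k B)).comp δ ∧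
        (BOp.counit k L B π).comp c' = b.restrictScalars k := by
  set j := Algebra.TensorProduct.map (IsScalarTower.toAlgHom k L Ω) (AlgHom.id k B)
  set ι := Algebra.TensorProduct.map (IsScalarTower.toAlgHom k K L) (AlgHom.id k B)
  have hcδ : ∀ a : K, c (algebraMap K R a) = j (ι (δ a)) := fun a => by
    have hjι : Algebra.TensorProduct.map (IsScalarTower.toAlgHom k K Ω) (AlgHom.id k B) =
        j.comp ι := by
      ext <;> simp [j, ι, ← IsScalarTower.algebraMap_apply]
    simpa [hjι] using congr($hcK a)
  obtain ⟨s, hs⟩ := Algebra.FiniteType.exists_finset_closure_eq_top K R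
  obtain ⟨c', hc'j, hc'b⟩ := BOp.exists_descent hπ (IsScalarTower.toAlgHom k L Ω) (b : R →+* L) hb
    (c : R →+* Ω ⊗[k] B) congr(AlgHom.toRingHom $hcb) s <| top_unique <| hs ▸
      Subring.closure_mono (Set.union_subset_union_left _ (by
        rintro _ ⟨a, rfl⟩
        exact ⟨_, (hcδ a).symm⟩))
  have hc'K : c'.comp (algebraMap K R) = (ι.comp δ : K →+* L ⊗[k] B) := by
    ext a
    exact Algebra.TensorProduct.map_id_injective (IsScalarTower.toAlgHom k L Ω).injective
      ((hc'j _ ⟨_, (hcδ a).symm⟩).trans (hcδ a))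
  exact ⟨c'.toAlgHomOfComp (ι.comp δ) hc'K, c'.toAlgHomOfComp_comp _ hc'K,
    AlgHom.ext fun r => congr($hc'b r)⟩

/-- (Corollary 2.10, points formulation.) Let `k` have characteristic `p > 0` and `B` be a
finite-dimensional commutative `k`-algebra with `π : B → k` such that `x ^ p = 0` for all
`x ∈ ker π`. Let `k ⊆ K ⊆ L` be a tower of fields and `δ : K → K ⊗[k] B` a `B`-operator on
`K`. Let `R` be a domain, finitely generated as a `K`-algebra (the coordinate ring of a
`K`-variety `W`), `b : R → L` an injective `K`-algebra map (a generic `L`-point of `W`),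
`Ω` an algebraically closed extension of `L`, and `c : R → Ω ⊗[k] B` a `k`-algebra map (an
`Ω`-point of `τ^δ(W)` above `b`) with `c ∘ (K → R) = ι ∘ δ` and `(id_Ω ⊗ π) ∘ c = (L ⊆ Ω) ∘ b`.
Then there is a `k`-algebra map `c' : R → L ⊗[k] B` (an `L`-point of the fiber) with
`c' ∘ (K → R) = ι' ∘ δ` and `(id_L ⊗ π) ∘ c' = b`. -/
theorem BOperator.fiber_of_prolongation_has_rational_point
    (p : ℕ) [Fact p.Prime] (k : Type*) [Field k] [CharP k p]
    (B : Type*) [CommRing B] [Algebra k B] [FiniteDimensional k B] (π : B →ₐ[k] k)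
    (hπ : ∀ x ∈ RingHom.ker π, x ^ p = 0)
    (K L Ω : Type*) [Field K] [Field L] [Field Ω]
    [Algebra k K] [Algebra k L] [Algebra k Ω]
    [Algebra K L] [IsScalarTower k K L]
    [Algebra L Ω] [IsScalarTower k L Ω]
    [Algebra K Ω] [IsScalarTower k K Ω] [IsScalarTower K L Ω] [IsAlgClosed Ω]
    (δ : K →ₐ[k] K ⊗[k] B)
    (hδ0 : (BOp.counit k K B π).comp δ = AlgHom.id k K)
    (R : Type*) [CommRing R] [IsDomain R] [Algebra k R] [Algebra K R] [IsScalarTower k K R]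
    [Algebra.FiniteType K R]
    (b : R →ₐ[K] L) (hb : Function.Injective b)
    (c : R →ₐ[k] Ω ⊗[k] B)
    (hcK : c.comp (IsScalarTower.toAlgHom k K R) =
      (Algebra.TensorProduct.map (IsScalarTower.toAlgHom k K Ω) (AlgHom.id k B)).comp δ)
    (hcb : (BOp.counit k Ω B π).comp c =
      (IsScalarTower.toAlgHom k L Ω).comp (b.restrictScalars k)) :
    ∃ c' : R →ₐ[k] L ⊗[k] B,
      c'.comp (IsScalarTower.toAlgHom k K R) =
        (Algebra.TensorProduct.map (IsScalarTower.toAlgHom k K L) (AlgHom.id k B)).comp δ ∧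
        (BOp.counit k L B π).comp c' = b.restrictScalars k :=
  BOperator.fiber_of_prolongation_has_rational_point_general p k B π hπ K L Ω δ R b hb c hcK hcb
end

section
/- Let k be a field of characteristic p > 0 and B a commutative k-algebra with a k-algebra homomorphism π : B → k such that x^p = 0 for every x ∈ ker π. Let (K, ∂) be a field extension of k with a B-operator ∂ on K. Then K^p ⊆ K^∂; that is, for every x ∈ K one has ∂(x^p) = x^p ⊗ 1_B. -/
open TensorProduct

/-! The kernel of `id ⊗ π : T ⊗ B → T` is the ideal generated by `1 ⊗ ker π`, whose generators
have vanishing `p`-th powers. As Frobenius is a ring endomorphism in characteristic `p`, its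
kernel contains that whole ideal, so every `z : T ⊗ B` satisfies `z ^ p = (∂₀ z) ^ p ⊗ 1`.
Applied to `z = ∂ x`, for which `∂₀ z = x`, this is the theorem. -/

theorem pow_char_eq_zero_of_mem_span {R : Type*} [CommRing R] (p : ℕ) [Fact p.Prime] [CharP R p]
    {s : Set R} (hs : ∀ y ∈ s, y ^ p = 0) {x : R} (hx : x ∈ Ideal.span s) : x ^ p = 0 :=
  Ideal.span_le (I := RingHom.ker (frobenius R p)).mpr hs hx

namespace BOp

variable {k T B : Type*} [Field k] [CommRing T] [Algebra k T] [CommRing B] [Algebra k B]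

theorem counit_tmul_one (π : B →ₐ[k] k) (a : T) : counit k T B π (a ⊗ₜ 1) = a := by
  simp [counit]

theorem ker_counit (π : B →ₐ[k] k) :
    RingHom.ker (counit k T B π) = (RingHom.ker π).map Algebra.TensorProduct.includeRight := by
  have hπ : Function.Surjective π := fun c => ⟨algebraMap k B c, π.commutes c⟩
  rw [← Algebra.TensorProduct.lTensor_ker _ hπ, counit, AlgHom.ker_coe, AlgHom.comp_toRingHom]
  exact RingHom.ker_comp_of_injective _ (Algebra.TensorProduct.rid k k T).injective

theorem charP_tensorProduct [Nontrivial T] (π : B →ₐ[k] k) (p : ℕ) [CharP k p] :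
    CharP (T ⊗[k] B) p :=
  have := (counit k T B π).toRingHom.domain_nontrivial
  charP_of_injective_algebraMap' k p

theorem pow_eq_counit_pow_tmul_one [Nontrivial T] (p : ℕ) [Fact p.Prime] [CharP k p]
    (π : B →ₐ[k] k) (hπ : ∀ b ∈ RingHom.ker π, b ^ p = 0) (z : T ⊗[k] B) :
    z ^ p = (counit k T B π z ^ p) ⊗ₜ 1 := by
  have := charP_tensorProduct (T := T) π p
  set w := z - counit k T B π z ⊗ₜ 1
  have hw : w ∈ RingHom.ker (counit k T B π) := by
    simp [w, RingHom.mem_ker, counit_tmul_one]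
  have hwp : w ^ p = 0 := by
    rw [ker_counit, Ideal.map] at hw
    refine pow_char_eq_zero_of_mem_span p ?_ hw
    rintro _ ⟨b, hb, rfl⟩
    simp [hπ b hb]
  calc z ^ p = (counit k T B π z ⊗ₜ 1 + w) ^ p := by rw [add_sub_cancel]
    _ = (counit k T B π z ^ p) ⊗ₜ 1 := by
      rw [add_pow_char, hwp, add_zero, Algebra.TensorProduct.tmul_pow, one_pow]

end BOp

/-- (Lemma 4.9.) Let `k` be a field of characteristic `p > 0` and `B` a commutative
`k`-algebra with a `k`-algebra map `π : B → k` such that `x ^ p = 0` for every `x ∈ ker π`.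
If `(K, δ)` is a field extension of `k` with a `B`-operator `δ` on `K`, then `K^p ⊆ K^δ`:
for every `x ∈ K` one has `δ (x ^ p) = x ^ p ⊗ 1`. -/
theorem BOperator.pow_p_subset_constants
    (p : ℕ) [Fact p.Prime] (k : Type*) [Field k] [CharP k p]
    (B : Type*) [CommRing B] [Algebra k B] (π : B →ₐ[k] k)
    (hπ : ∀ x ∈ RingHom.ker π, x ^ p = 0)
    (K : Type*) [Field K] [Algebra k K]
    (δ : K →ₐ[k] K ⊗[k] B) (hδ0 : (BOp.counit k K B π).comp δ = AlgHom.id k K)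
    (x : K) :
    δ (x ^ p) = (x ^ p) ⊗ₜ[k] (1 : B) := by
  have hδx : BOp.counit k K B π (δ x) = x := DFunLike.congr_fun hδ0 x
  rw [map_pow, BOp.pow_eq_counit_pow_tmul_one p π hπ, hδx]
end
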